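/- arXiv:1106.3905 — 2 statements merged into one kernel-verified Lean document; each statement's English description precedes it below -/
import Mathlib

section
/- Let Λ be a non-trivial chain transitive set of a C¹ vector field X containing a hyperbolic singularity σ. Then Λ intersects both W^s(σ)\{σ} and W^u(σ)\{σ}. -/
/-!
For a large time `T`, hyperbolicity makes the derivative of the time-`T` map at `σ` contract
`Es` and expand `Eu` by a factor `8`; a cone argument on the two projections then shows that
any point whose `T`-orbit stays in a small ball around `σ` converges to `σ`.
To find such a point in `Λ`, take `ε`-chains in `Λ` from some `y ≠ σ` down to `σ` and cut each
at the last moment it is `r`-far from `σ`: by Grönwall, the true forward orbit of that point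
shadows the rest of the chain, which stays `r`-close to `σ`, up to an error that vanishes with
`ε`. A limit point as `ε → 0` lies in `W^s(σ) \ {σ}`. The unstable side is the same statement
for the reversed flow, for which `Λ` is again chain transitive.
-/

open Set Metric Filter Module

variable {V : Type*} [NormedAddCommGroup V] [NormedSpace ℝ V]

/-- `φ` is the flow generated by the vector field `X`. -/
def IsFlowOf (X : V → V) (φ : ℝ → V → V) : Prop :=
  (∀ x, φ 0 x = x) ∧ (∀ s t x, φ (s + t) x = φ s (φ t x)) ∧
    ∀ x t, HasDerivAt (fun s => φ s x) (X (φ t x)) t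

/-- Invariance of a subbundle `E` under the cocycle `A` over points of `Λ`. -/
def InvariantBundle (φ : ℝ → V → V) (A : ℝ → V → V →L[ℝ] V) (Λ : Set V)
    (E : V → Submodule ℝ V) : Prop :=
  ∀ x ∈ Λ, ∀ t : ℝ, ∀ v ∈ E x, A t x v ∈ E (φ t x)

/-- A dominated splitting `E ⊕ F` over `Λ` for the cocycle `A` over the flow `φ`. -/
def DominatedOn (φ : ℝ → V → V) (A : ℝ → V → V →L[ℝ] V) (Λ : Set V)
    (E F : V → Submodule ℝ V) : Prop :=
  (∀ x ∈ Λ, E x ⊓ F x = ⊥ ∧ E x ⊔ F x = ⊤) ∧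
    InvariantBundle φ A Λ E ∧ InvariantBundle φ A Λ F ∧
    ∃ C > 0, ∃ lam > 0, ∀ x ∈ Λ, ∀ t > 0, ∀ u ∈ E x, ∀ v ∈ F x,
      ‖A t x u‖ * ‖v‖ ≤ C * Real.exp (-lam * t) * (‖u‖ * ‖A t x v‖)

/-- The tangent flow of a flow `φ`: the derivative of the time-`t` map. -/
noncomputable def tangentFlow (φ : ℝ → V → V) (t : ℝ) (x : V) : V →L[ℝ] V :=
  fderiv ℝ (φ t) x

/-- A compact invariant chain transitive set: every pair of points is joined by
`ε`-chains within `Λ` with times `≥ 1`, for every `ε > 0`. -/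
def ChainTransitiveSet {M : Type*} [MetricSpace M] (φ : ℝ → M → M) (Λ : Set M) : Prop :=
  IsCompact Λ ∧ (∀ t : ℝ, φ t '' Λ = Λ) ∧
    ∀ ε > (0 : ℝ), ∀ x ∈ Λ, ∀ y ∈ Λ, ∃ n : ℕ, ∃ xs : ℕ → M, ∃ ts : ℕ → ℝ,
      1 ≤ n ∧ xs 0 = x ∧ xs n = y ∧ (∀ i ≤ n, xs i ∈ Λ) ∧
      ∀ i < n, 1 ≤ ts i ∧ dist (φ (ts i) (xs i)) (xs (i + 1)) < ε

/-- A hyperbolic splitting `Es ⊕ Eu` for the one-parameter linear family `L`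
(e.g. `L t = e^{t·DX(σ)}`): invariant complementary subspaces which are uniformly
contracted, resp. expanded. -/
def IsHypSplitting {W : Type*} [NormedAddCommGroup W] [NormedSpace ℝ W]
    (L : ℝ → W →L[ℝ] W) (Es Eu : Submodule ℝ W) : Prop :=
  Es ⊓ Eu = ⊥ ∧ Es ⊔ Eu = ⊤ ∧
    (∀ (t : ℝ), ∀ v ∈ Es, L t v ∈ Es) ∧ (∀ (t : ℝ), ∀ v ∈ Eu, L t v ∈ Eu) ∧
    ∃ C > (0 : ℝ), ∃ lam > (0 : ℝ), ∀ t > (0 : ℝ),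
      (∀ v ∈ Es, ‖L t v‖ ≤ C * Real.exp (-lam * t) * ‖v‖) ∧
      (∀ v ∈ Eu, ‖L (-t) v‖ ≤ C * Real.exp (-lam * t) * ‖v‖)

/-- The stable set of a point `σ` for the flow `φ`. -/
def stableSet (φ : ℝ → V → V) (σ : V) : Set V :=
  {x | Tendsto (fun t : ℝ => φ t x) atTop (nhds σ)}

/-- The unstable set of a point `σ` for the flow `φ`. -/
def unstableSet (φ : ℝ → V → V) (σ : V) : Set V :=
  {x | Tendsto (fun t : ℝ => φ t x) atBot (nhds σ)}

open Topology

theorem natCast_le_sum_range_add_one {t : ℕ → ℝ} {j : ℕ} (ht₀ : ∀ i < j, 0 ≤ t i)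
    (ht₁ : ∀ i < j, 0 < i → 1 ≤ t i) : (j : ℝ) ≤ ∑ i ∈ Finset.range j, t i + 1 := by
  induction j with
  | zero => simp
  | succ j ih =>
    rw [Finset.sum_range_succ, Nat.cast_succ]
    rcases j.eq_zero_or_pos with rfl | hj0
    · simp [ht₀ 0 one_pos]
    · linarith [ih (fun i hi => ht₀ i (by omega)) (fun i hi => ht₁ i (by omega)),
        ht₁ j (by omega) hj0]

section Chains

variable {M : Type*} [MetricSpace M] {F : ℝ → M → M} {Λ : Set M} {K : ℝ}

structure IsContinuousFlow (F : ℝ → M → M) : Prop where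
  zero_apply : ∀ x, F 0 x = x
  add_apply : ∀ s t x, F (s + t) x = F s (F t x)
  continuous_orbit : ∀ x, Continuous fun t => F t x

def ExpLipschitzOn (F : ℝ → M → M) (K : ℝ) (Λ : Set M) : Prop :=
  ∀ t, 0 ≤ t → ∀ x ∈ Λ, ∀ y ∈ Λ, dist (F t x) (F t y) ≤ dist x y * Real.exp (K * t)

theorem IsContinuousFlow.exists_last_exit (hF : IsContinuousFlow F) {σ : M} {r : ℝ} {n : ℕ}
    {z : ℕ → M} {t : ℕ → ℝ} (hn : 1 ≤ n) (ht : 0 ≤ t 0) (hz₀ : r ≤ dist (z 0) σ) :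
    ∃ i₀ < n, ∃ s₀ ∈ Icc 0 (t i₀), r ≤ dist (F s₀ (z i₀)) σ ∧
      (∀ u ∈ Ioc s₀ (t i₀), dist (F u (z i₀)) σ < r) ∧
      ∀ i, i₀ < i → i < n → ∀ u ∈ Icc 0 (t i), dist (F u (z i)) σ < r := by
  classical
  set far : ℕ → Prop := fun i => ∃ u ∈ Icc 0 (t i), r ≤ dist (F u (z i)) σ
  set i₀ := Nat.findGreatest far (n - 1)
  have hfar₀ : far i₀ :=
    Nat.findGreatest_spec (Nat.zero_le _) ⟨0, ⟨le_rfl, ht⟩, by rwa [hF.zero_apply]⟩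
  have hS : IsCompact (Icc 0 (t i₀) ∩ {u | r ≤ dist (F u (z i₀)) σ}) :=
    isCompact_Icc.inter_right (isClosed_le continuous_const
      ((hF.continuous_orbit _).dist continuous_const))
  obtain ⟨s₀, ⟨hs₀, hs₀far⟩, hs₀max⟩ := hS.exists_isGreatest hfar₀
  refine ⟨i₀, by have := Nat.findGreatest_le (P := far) (n - 1); omega, s₀, hs₀, hs₀far,
    fun u hu => ?_, fun i hi hin u hu => ?_⟩
  · by_contra! h
    exact hu.1.not_ge (hs₀max ⟨⟨hs₀.1.trans hu.1.le, hu.2⟩, h⟩)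
  · by_contra! h
    exact Nat.findGreatest_is_greatest hi (by omega) ⟨u, hu, h⟩

namespace ExpLipschitzOn

theorem dist_apply_sum_le (hLip : ExpLipschitzOn F K Λ) (hK : 0 ≤ K) (hF : IsContinuousFlow F)
    (hinv : ∀ t, MapsTo (F t) Λ Λ) {ε : ℝ} {n : ℕ} {z : ℕ → M} {t : ℕ → ℝ}
    (hz : ∀ i ≤ n, z i ∈ Λ) (ht : ∀ i < n, 0 ≤ t i)
    (hjump : ∀ i < n, dist (F (t i) (z i)) (z (i + 1)) < ε) :
    ∀ j ≤ n, dist (F (∑ i ∈ Finset.range j, t i) (z 0)) (z j) ≤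
      j * ε * Real.exp (K * ∑ i ∈ Finset.range j, t i) := by
  intro j
  induction j with
  | zero => simp [hF.zero_apply]
  | succ j ih =>
    intro hj
    set T := ∑ i ∈ Finset.range j, t i
    have hT : 0 ≤ T := Finset.sum_nonneg fun i hi => ht i (by simp at hi; omega)
    have hε : 0 ≤ ε := dist_nonneg.trans (hjump j hj).le
    rw [Finset.sum_range_succ, add_comm T, hF.add_apply]
    calc dist (F (t j) (F T (z 0))) (z (j + 1))
        ≤ dist (F (t j) (F T (z 0))) (F (t j) (z j)) + dist (F (t j) (z j)) (z (j + 1)) :=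
          dist_triangle _ _ _
      _ ≤ dist (F T (z 0)) (z j) * Real.exp (K * t j) + ε * Real.exp (K * (T + t j)) := by
          gcongr
          · exact hLip _ (ht j hj) _ (hinv T (hz 0 (by omega))) _ (hz j (by omega))
          · exact (hjump j hj).le.trans
              (le_mul_of_one_le_right hε (Real.one_le_exp (by nlinarith [ht j hj])))
      _ ≤ j * ε * Real.exp (K * T) * Real.exp (K * t j) + ε * Real.exp (K * (T + t j)) := by
          gcongr
          exact ih (by omega)
      _ = ((j + 1 : ℕ) : ℝ) * ε * Real.exp (K * (t j + T)) := by
          rw [mul_add, mul_add, Real.exp_add, Real.exp_add]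
          push_cast
          ring

theorem dist_apply_le_of_chain (hLip : ExpLipschitzOn F K Λ) (hK : 0 ≤ K)
    (hF : IsContinuousFlow F) (hinv : ∀ t, MapsTo (F t) Λ Λ) {σ : M} (hfix : ∀ t, F t σ = σ)
    {ε r : ℝ} (hε : 0 ≤ ε) (hr : 0 ≤ r) {n : ℕ} {z : ℕ → M} {t : ℕ → ℝ}
    (hz : ∀ i ≤ n, z i ∈ Λ) (ht₀ : ∀ i < n, 0 ≤ t i) (ht₁ : ∀ i < n, 0 < i → 1 ≤ t i)
    (hjump : ∀ i < n, dist (F (t i) (z i)) (z (i + 1)) < ε) (hzn : z n = σ)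
    (hnear : ∀ i < n, ∀ u ∈ Ioc 0 (t i), dist (F u (z i)) σ ≤ r) {s : ℝ} (hs : 0 < s) :
    dist (F s (z 0)) σ ≤ r + (s + 1) * ε * Real.exp (K * s) := by
  classical
  set T : ℕ → ℝ := fun j => ∑ i ∈ Finset.range j, t i
  -- `z j` is the last chain point reached before time `s`; `F s (z 0)` shadows `F u (z j)`
  set j := Nat.findGreatest (fun j => T j < s) n
  have hjn : j ≤ n := Nat.findGreatest_le n
  have hTj : T j < s := Nat.findGreatest_spec (P := fun j => T j < s) (Nat.zero_le n) (by simpa [T])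
  set u := s - T j
  have hu : 0 < u := sub_pos.2 hTj
  have hsplit : F s (z 0) = F u (F (T j) (z 0)) := by rw [← hF.add_apply, sub_add_cancel]
  have hseg : dist (F u (z j)) σ ≤ r := by
    rcases hjn.lt_or_eq with hlt | heq
    · refine hnear j hlt u ⟨hu, ?_⟩
      have := Nat.findGreatest_is_greatest (P := fun j => T j < s) (Nat.lt_succ_self j) hlt
      simp only [T, Finset.sum_range_succ, not_lt] at this
      linarith
    · rw [heq, hzn, hfix, dist_self]
      exact hr
  calc dist (F s (z 0)) σ ≤ dist (F u (F (T j) (z 0))) (F u (z j)) + dist (F u (z j)) σ := by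
        rw [hsplit]; exact dist_triangle _ _ _
    _ ≤ j * ε * Real.exp (K * T j) * Real.exp (K * u) + r := by
        gcongr
        refine (hLip u hu.le _ (hinv _ (hz 0 (Nat.zero_le n))) _ (hz j hjn)).trans ?_
        gcongr
        exact hLip.dist_apply_sum_le hK hF hinv hz ht₀ hjump j hjn
    _ ≤ (s + 1) * ε * Real.exp (K * s) + r := by
        rw [mul_assoc _ (Real.exp _), ← Real.exp_add, ← mul_add, add_sub_cancel]
        gcongr
        linarith [natCast_le_sum_range_add_one (fun i hi => ht₀ i (hi.trans_le hjn))
          fun i hi => ht₁ i (hi.trans_le hjn)]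
    _ = r + (s + 1) * ε * Real.exp (K * s) := add_comm _ _

theorem exists_orbit_near_of_chain (hLip : ExpLipschitzOn F K Λ) (hK : 0 ≤ K)
    (hF : IsContinuousFlow F) (hinv : ∀ t, MapsTo (F t) Λ Λ) {σ : M} (hfix : ∀ t, F t σ = σ)
    {ε r : ℝ} (hε : 0 ≤ ε) (hr : 0 ≤ r) {n : ℕ} {z : ℕ → M} {t : ℕ → ℝ} (hn : 1 ≤ n)
    (hz : ∀ i ≤ n, z i ∈ Λ) (ht : ∀ i < n, 1 ≤ t i)
    (hjump : ∀ i < n, dist (F (t i) (z i)) (z (i + 1)) < ε)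
    (hz₀ : r ≤ dist (z 0) σ) (hzn : z n = σ) :
    ∃ x ∈ Λ, r ≤ dist x σ ∧ ∀ s, 0 < s → dist (F s x) σ ≤ r + (s + 1) * ε * Real.exp (K * s) := by
  obtain ⟨i₀, hi₀, s₀, ⟨hs₀, hs₀t⟩, hs₀far, hafter, hlater⟩ :=
    hF.exists_last_exit hn (zero_le_one.trans (ht 0 hn)) hz₀
  -- the chain restarted at `F s₀ (z i₀)`: its first segment is shortened by `s₀`
  set o : ℕ → ℝ := fun k => if k = 0 then s₀ else 0
  have ho : ∀ k, i₀ + k < n → o k ≤ t (i₀ + k) := fun k hk => by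
    by_cases hk0 : k = 0 <;> simp only [o, hk0, if_true, if_false, add_zero]
    · exact hs₀t
    · linarith [ht _ hk]
  refine ⟨F s₀ (z i₀), hinv _ (hz i₀ hi₀.le), hs₀far, fun s hs => ?_⟩
  have := hLip.dist_apply_le_of_chain hK hF hinv hfix hε hr (n := n - i₀)
    (z := fun k => F (o k) (z (i₀ + k))) (t := fun k => t (i₀ + k) - o k)
    (fun k hk => hinv _ (hz _ (by omega)))
    (fun k hk => sub_nonneg.2 (ho k (by omega)))
    (fun k hk hk0 => by simp [o, hk0.ne']; exact ht _ (by omega))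
    (fun k hk => by
      simpa [← hF.add_apply, o, add_assoc, hF.zero_apply] using hjump (i₀ + k) (by omega))
    (by simp [o, show n - i₀ ≠ 0 by omega, hF.zero_apply, show i₀ + (n - i₀) = n by omega, hzn])
    (fun k hk u hu => by
      rw [← hF.add_apply]
      rcases eq_or_ne k 0 with rfl | hk0
      · simp only [o, if_pos, add_zero] at hu ⊢
        exact (hafter (u + s₀) ⟨by linarith [hu.1], by linarith [hu.2]⟩).le
      · simp only [o, if_neg hk0, add_zero, sub_zero] at hu ⊢
        exact (hlater _ (by omega) (by omega) u ⟨hu.1.le, hu.2⟩).le)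
    hs
  simpa [o] using this

theorem exists_forward_orbit_near (hLip : ExpLipschitzOn F K Λ) (hF : IsContinuousFlow F)
    (hΛ : IsCompact Λ) {σ : M} {r : ℝ}
    (happrox : ∀ ε > 0, ∃ x ∈ Λ, r ≤ dist x σ ∧
      ∀ s, 0 < s → dist (F s x) σ ≤ r + (s + 1) * ε * Real.exp (K * s)) :
    ∃ x ∈ Λ, r ≤ dist x σ ∧ ∀ s, 0 ≤ s → dist (F s x) σ ≤ r := by
  choose x hxΛ hxr hxnear using fun k : ℕ => happrox (1 / (k + 1)) Nat.one_div_pos_of_nat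
  obtain ⟨y, hyΛ, ψ, hψ, hlim⟩ := hΛ.tendsto_subseq hxΛ
  have hpos : ∀ s, 0 < s → dist (F s y) σ ≤ r := by
    intro s hs
    have h₁ : Tendsto (fun k => dist y (x (ψ k))) atTop (𝓝 0) := by
      simpa using (tendsto_const_nhds (x := y)).dist hlim
    have h₂ : Tendsto (fun k => 1 / ((ψ k : ℝ) + 1)) atTop (𝓝 0) :=
      tendsto_one_div_add_atTop_nhds_zero_nat.comp hψ.tendsto_atTop
    have hconv : Tendsto (fun k => dist y (x (ψ k)) * Real.exp (K * s) +
        (r + (s + 1) * (1 / ((ψ k : ℝ) + 1)) * Real.exp (K * s))) atTop (𝓝 r) := by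
      simpa using (h₁.mul_const _).add (tendsto_const_nhds (x := r).add
        ((h₂.const_mul (s + 1)).mul_const (Real.exp (K * s))))
    exact ge_of_tendsto' hconv fun k => (dist_triangle _ (F s (x (ψ k))) _).trans
      (add_le_add (hLip s hs.le _ hyΛ _ (hxΛ _)) (hxnear _ s hs))
  refine ⟨y, hyΛ, ge_of_tendsto (hlim.dist tendsto_const_nhds) (.of_forall fun k => hxr _),
    fun s hs => ?_⟩
  have hcl : closure (Ioi 0) ⊆ {s | dist (F s y) σ ≤ r} :=
    (isClosed_le ((hF.continuous_orbit y).dist continuous_const) continuous_const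
      ).closure_subset_iff.2 hpos
  exact hcl (by rwa [closure_Ioi])

theorem tendsto_atTop_of_tendsto_nat_mul (hLip : ExpLipschitzOn F K Λ) (hK : 0 ≤ K)
    (hF : IsContinuousFlow F) (hinv : ∀ t, MapsTo (F t) Λ Λ) {σ : M} (hσ : σ ∈ Λ)
    (hfix : ∀ t, F t σ = σ) {x : M} (hx : x ∈ Λ) {T : ℝ} (hT : 0 < T)
    (h : Tendsto (fun n : ℕ => F (n * T) x) atTop (𝓝 σ)) :
    Tendsto (fun t => F t x) atTop (𝓝 σ) := by
  have hfloor : Tendsto (fun t : ℝ => ⌊t / T⌋₊) atTop atTop :=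
    tendsto_nat_floor_atTop.comp (tendsto_id.atTop_div_const hT)
  have hlim := ((h.comp hfloor).dist (tendsto_const_nhds (x := σ))).mul_const (Real.exp (K * T))
  rw [dist_self, zero_mul] at hlim
  rw [tendsto_iff_dist_tendsto_zero]
  refine squeeze_zero' (.of_forall fun _ => dist_nonneg) ?_ hlim
  filter_upwards [eventually_ge_atTop 0] with t ht
  set n := ⌊t / T⌋₊
  have hn : n * T ≤ t := (le_div_iff₀ hT).1 (Nat.floor_le (div_nonneg ht hT.le))
  have hn' : t < (n + 1) * T := (div_lt_iff₀ hT).1 (Nat.lt_floor_add_one _)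
  calc dist (F t x) σ = dist (F (t - n * T) (F (n * T) x)) (F (t - n * T) σ) := by
        rw [← hF.add_apply, sub_add_cancel, hfix]
    _ ≤ dist (F (n * T) x) σ * Real.exp (K * (t - n * T)) :=
        hLip _ (by linarith) _ (hinv _ hx) _ hσ
    _ ≤ dist (F (n * T) x) σ * Real.exp (K * T) := by gcongr; linarith

end ExpLipschitzOn

theorem IsContinuousFlow.apply_neg_apply (hF : IsContinuousFlow F) (t : ℝ) (x : M) :
    F (-t) (F t x) = x := by
  rw [← hF.add_apply, neg_add_cancel, hF.zero_apply]

theorem ChainTransitiveSet.reverse (hF : IsContinuousFlow F) (hΛ : ChainTransitiveSet F Λ) :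
    ChainTransitiveSet (fun t => F (-t)) Λ := by
  obtain ⟨hcomp, himage, hchain⟩ := hΛ
  refine ⟨hcomp, fun t => himage (-t), fun ε hε x hx y hy => ?_⟩
  -- reverse an `F`-chain from `y` to `F (-1) x`, closed up by an exact hop of time `1`
  obtain ⟨n, z, t, hn, hz0, hzn, hzΛ, hjump⟩ :=
    hchain ε hε y hy (F (-1) x) (himage (-1) ▸ mem_image_of_mem _ hx)
  set τ : ℕ → ℝ := fun j => Function.update t n 1 (n - j)
  set w : ℕ → M := fun j => if j ≤ n then F (τ j) (z (n - j)) else y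
  have hback : ∀ j ≤ n, F (-τ j) (w j) = z (n - j) := fun j hj => by
    simp only [w, if_pos hj, hF.apply_neg_apply]
  refine ⟨n + 1, w, τ, by omega, ?_, by simp [w], fun j hj => ?_, fun j hj => ⟨?_, ?_⟩⟩
  · simp [w, τ, hzn, ← hF.add_apply, hF.zero_apply]
  · by_cases hjn : j ≤ n
    · simp only [w, if_pos hjn]
      exact himage _ ▸ mem_image_of_mem _ (hzΛ _ (by omega))
    · simp only [w, if_neg hjn, hy]
  · by_cases hjn : n - j = n
    · simp [τ, hjn]
    · simp only [τ, Function.update_of_ne hjn]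
      exact (hjump _ (by omega)).1
  · change dist (F (-τ j) (w j)) _ < ε
    rw [hback j (by omega)]
    rcases (show j < n ∨ j = n by omega) with hjn | rfl
    · have h := (hjump (n - (j + 1)) (by omega)).2
      rw [show n - (j + 1) + 1 = n - j by omega] at h
      simpa [w, τ, show j + 1 ≤ n by omega, Function.update_of_ne (show n - (j + 1) ≠ n by omega),
        dist_comm] using h
    · simpa [w, hz0] using hε

end Chains

theorem tendsto_add_of_cone_recurrence {a b : ℕ → ℝ} (ha : ∀ n, 0 ≤ a n) (hb : ∀ n, 0 ≤ b n)
    (hbdd : BddAbove (range b)) (hstep_a : ∀ n, 4 * a (n + 1) ≤ a n + b n)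
    (hstep_b : ∀ n, 63 * b n ≤ 8 * b (n + 1) + a n) :
    Tendsto (fun n => a n + b n) atTop (𝓝 0) := by
  have hcone : ∀ n, b n ≤ a n := by
    by_contra! ⟨n, hn⟩
    -- the cone `a < b` is invariant, and `b` at least doubles inside it
    have hgrow : ∀ k, a (n + k) < b (n + k) ∧ 2 ^ k * b n ≤ b (n + k) := by
      intro k
      induction k with
      | zero => simpa using hn
      | succ k ih =>
        have h₁ := hstep_a (n + k)
        have h₂ := hstep_b (n + k)
        rw [← add_assoc, pow_succ]
        constructor <;> nlinarith [ha (n + k)]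
    obtain ⟨B, hB⟩ := hbdd
    obtain ⟨k, hk⟩ := pow_unbounded_of_one_lt (B / b n) one_lt_two
    have hbn : 0 < b n := (ha n).trans_lt hn
    rw [div_lt_iff₀ hbn] at hk
    linarith [(hgrow k).2, hB (mem_range_self (n + k))]
  have hgeo : ∀ n, a n ≤ (1 / 2) ^ n * a 0 := by
    intro n
    induction n with
    | zero => simp
    | succ n ih =>
      rw [pow_succ]
      nlinarith [hstep_a n, hcone n]
  refine squeeze_zero (g := fun n => (1 / 2 : ℝ) ^ n * (2 * a 0))
    (fun n => add_nonneg (ha n) (hb n)) (fun n => by linarith [hcone n, hgeo n]) ?_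
  simpa using (tendsto_pow_atTop_nhds_zero_of_lt_one (r := (1 / 2 : ℝ)) (by norm_num)
    (by norm_num)).mul_const (2 * a 0)

theorem Submodule.projection_comm_of_invariant {R M : Type*} [Ring R] [AddCommGroup M]
    [Module R M] {E F : Submodule R M} (h : IsCompl E F) {L : M →ₗ[R] M}
    (hE : ∀ v ∈ E, L v ∈ E) (hF : ∀ v ∈ F, L v ∈ F) (v : M) :
    E.projection F h (L v) = L (E.projection F h v) := by
  conv_lhs => rw [← projection_add_projection_eq_self h v]
  rw [map_add, map_add, projection_apply_of_mem_left h (hE _ (projection_apply_mem _ _)),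
    projection_apply_of_mem_right h (hF _ (projection_apply_mem _ _)), add_zero]

theorem Submodule.norm_le_norm_projection_add {E F : Submodule ℝ V} (h : IsCompl E F) (v : V) :
    ‖v‖ ≤ ‖E.projection F h v‖ + ‖F.projection E h.symm v‖ := by
  simpa [projection_add_projection_eq_self] using
    norm_add_le (E.projection F h v) (F.projection E h.symm v)

theorem IsCompl.norm_projection_step {E F : Submodule ℝ V} (hEF : IsCompl E F) {L : V →L[ℝ] V}
    (hLE : ∀ v ∈ E, L v ∈ E) (hLF : ∀ v ∈ F, L v ∈ F)
    (hcontr : ∀ v ∈ E, 8 * ‖L v‖ ≤ ‖v‖) (hexpand : ∀ v ∈ F, 8 * ‖v‖ ≤ ‖L v‖) {c : ℝ}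
    (hP : ∀ v, ‖E.projection F hEF v‖ ≤ c * ‖v‖)
    (hQ : ∀ v, ‖F.projection E hEF.symm v‖ ≤ c * ‖v‖) {w w' : V}
    (hw' : 8 * c * ‖w' - L w‖ ≤ ‖w‖) :
    4 * ‖E.projection F hEF w'‖ ≤ ‖E.projection F hEF w‖ + ‖F.projection E hEF.symm w‖ ∧
      63 * ‖F.projection E hEF.symm w‖ ≤
        8 * ‖F.projection E hEF.symm w'‖ + ‖E.projection F hEF w‖ := by
  set P := E.projection F hEF
  set Q := F.projection E hEF.symm
  have hw := Submodule.norm_le_norm_projection_add hEF w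
  have hPr : 8 * ‖P (w' - L w)‖ ≤ ‖w‖ := by linarith [hP (w' - L w)]
  have hQr : 8 * ‖Q (w' - L w)‖ ≤ ‖w‖ := by linarith [hQ (w' - L w)]
  have hPL : ∀ v, P (L v) = L (P v) :=
    Submodule.projection_comm_of_invariant hEF (L := L.toLinearMap) hLE hLF
  have hQL : ∀ v, Q (L v) = L (Q v) :=
    Submodule.projection_comm_of_invariant hEF.symm (L := L.toLinearMap) hLF hLE
  have hPw' : P w' = L (P w) + P (w' - L w) := by rw [map_sub, hPL, add_sub_cancel]
  have hQw : L (Q w) = Q w' - Q (w' - L w) := by rw [map_sub, hQL, sub_sub_cancel]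
  constructor
  · have h₁ : 8 * ‖L (P w)‖ ≤ ‖P w‖ := hcontr _ (Submodule.projection_apply_mem hEF w)
    have h₂ := norm_add_le (L (P w)) (P (w' - L w))
    rw [← hPw'] at h₂
    linarith [norm_nonneg (Q w)]
  · have h₁ : 8 * ‖Q w‖ ≤ ‖L (Q w)‖ := hexpand _ (Submodule.projection_apply_mem hEF.symm w)
    have h₂ := norm_sub_le (Q w') (Q (w' - L w))
    rw [← hQw] at h₂
    linarith

theorem HasFDerivAt.tendsto_iterate_of_hyperbolic [FiniteDimensional ℝ V] {f : V → V}
    {L : V →L[ℝ] V} {p : V} (hf : HasFDerivAt f L p) (hfp : f p = p) {E F : Submodule ℝ V}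
    (hEF : IsCompl E F) (hLE : ∀ v ∈ E, L v ∈ E) (hLF : ∀ v ∈ F, L v ∈ F)
    (hcontr : ∀ v ∈ E, 8 * ‖L v‖ ≤ ‖v‖) (hexpand : ∀ v ∈ F, 8 * ‖v‖ ≤ ‖L v‖) :
    ∃ δ > 0, ∀ x, (∀ n, dist (f^[n] x) p ≤ δ) → Tendsto (fun n => f^[n] x) atTop (𝓝 p) := by
  set P := E.projection F hEF
  set Q := F.projection E hEF.symm
  obtain ⟨c, hc, hP, hQ⟩ : ∃ c > 0, (∀ v, ‖P v‖ ≤ c * ‖v‖) ∧ ∀ v, ‖Q v‖ ≤ c * ‖v‖ := by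
    set P' := LinearMap.toContinuousLinearMap P
    set Q' := LinearMap.toContinuousLinearMap Q
    refine ⟨‖P'‖ + ‖Q'‖ + 1, by positivity, fun v => (P'.le_opNorm v).trans ?_,
      fun v => (Q'.le_opNorm v).trans ?_⟩ <;> gcongr <;> linarith [norm_nonneg P', norm_nonneg Q']
  obtain ⟨δ, hδ, hlo⟩ :=
    Metric.eventually_nhds_iff.1 (hf.isLittleO.def (c := 1 / (8 * c)) (by positivity))
  refine ⟨δ / 2, half_pos hδ, fun x hx => ?_⟩
  set w : ℕ → V := fun n => f^[n] x - p
  have hstep : ∀ n, 8 * c * ‖w (n + 1) - L (w n)‖ ≤ ‖w n‖ := fun n => by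
    have := hlo (y := f^[n] x) ((hx n).trans_lt (half_lt_self hδ))
    rw [hfp, ← Function.iterate_succ_apply' f n x] at this
    calc 8 * c * ‖w (n + 1) - L (w n)‖ ≤ 8 * c * (1 / (8 * c) * ‖w n‖) :=
          mul_le_mul_of_nonneg_left this (by positivity)
      _ = ‖w n‖ := by field_simp
  have hcone := fun n => hEF.norm_projection_step hLE hLF hcontr hexpand hP hQ (hstep n)
  have hbdd : BddAbove (range fun n => ‖Q (w n)‖) := ⟨c * (δ / 2), by
    rintro _ ⟨n, rfl⟩
    exact (hQ _).trans (by gcongr; rw [← dist_eq_norm]; exact hx n)⟩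
  rw [tendsto_iff_norm_sub_tendsto_zero]
  exact squeeze_zero (fun n => norm_nonneg _)
    (fun n => Submodule.norm_le_norm_projection_add hEF (w n))
    (tendsto_add_of_cone_recurrence (fun n => norm_nonneg _) (fun n => norm_nonneg _) hbdd
      (fun n => (hcone n).1) fun n => (hcone n).2)

theorem IsHypSplitting.reverse {W : Type*} [NormedAddCommGroup W] [NormedSpace ℝ W]
    {L : ℝ → W →L[ℝ] W} {Es Eu : Submodule ℝ W} (h : IsHypSplitting L Es Eu) :
    IsHypSplitting (fun t => L (-t)) Eu Es := by
  obtain ⟨hinf, hsup, hEs, hEu, C, hC, lam, hlam, hbound⟩ := h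
  exact ⟨by rwa [inf_comm], by rwa [sup_comm], fun t => hEu (-t), fun t => hEs (-t), C, hC, lam,
    hlam, fun t ht => ⟨(hbound t ht).2, by simpa using (hbound t ht).1⟩⟩

omit [NormedSpace ℝ V] in
theorem unstableSet_eq_stableSet_neg (φ : ℝ → V → V) (σ : V) :
    unstableSet φ σ = stableSet (fun t => φ (-t)) σ := by
  ext x
  constructor <;> intro h
  · exact h.comp tendsto_neg_atTop_atBot
  · show Tendsto (fun t => φ t x) atBot (𝓝 σ)
    simpa [Function.comp_def] using h.comp tendsto_neg_atBot_atTop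

theorem ContinuousOn.forall_lt_of_forall_Ico_lt {g : ℝ → ℝ} {a b δ : ℝ}
    (hg : ContinuousOn g (Icc a b)) (h : ∀ τ ∈ Icc a b, (∀ u ∈ Ico a τ, g u < δ) → g τ < δ) :
    ∀ τ ∈ Icc a b, g τ < δ := by
  by_contra! hbad
  have hB : IsCompact (Icc a b ∩ g ⁻¹' Ici δ) := isCompact_Icc.of_isClosed_subset
    (hg.preimage_isClosed_of_isClosed isClosed_Icc isClosed_Ici) inter_subset_left
  obtain ⟨τ, ⟨hτ, hτδ⟩, hfirst⟩ := hB.exists_isLeast hbad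
  refine (h τ hτ fun u hu => ?_).not_ge hτδ
  by_contra! hu'
  exact (hfirst ⟨⟨hu.1, hu.2.le.trans hτ.2⟩, hu'⟩).not_gt hu.2

theorem DifferentiableAt.exists_norm_le_mul_of_eq_zero {E F : Type*} [NormedAddCommGroup E]
    [NormedSpace ℝ E] [NormedAddCommGroup F] [NormedSpace ℝ F] {f : E → F} {a : E}
    (hd : DifferentiableAt ℝ f a) (ha : f a = 0) :
    ∃ δ > 0, ∀ w, ‖w - a‖ < δ → ‖f w‖ ≤ (‖fderiv ℝ f a‖ + 1) * ‖w - a‖ := by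
  obtain ⟨δ, hδ, hlo⟩ := Metric.eventually_nhds_iff.1 (hd.hasFDerivAt.isLittleO.def one_pos)
  refine ⟨δ, hδ, fun w hw => ?_⟩
  have h₁ := hlo (y := w) (by rwa [dist_eq_norm])
  rw [ha, sub_zero] at h₁
  linarith [norm_sub_norm_le (f w) (fderiv ℝ f a (w - a)), (fderiv ℝ f a).le_opNorm (w - a)]

theorem gronwallBound_zero_eq_mul (K ε x : ℝ) :
    gronwallBound 0 K ε x = ε * gronwallBound 0 K 1 x := by
  unfold gronwallBound
  split_ifs <;> ring

namespace IsFlowOf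

variable {X : V → V} {φ : ℝ → V → V}

theorem isContinuousFlow (hφ : IsFlowOf X φ) : IsContinuousFlow φ :=
  ⟨hφ.1, hφ.2.1, fun x => continuous_iff_continuousAt.2 fun t => (hφ.2.2 x t).continuousAt⟩

theorem reverse (hφ : IsFlowOf X φ) : IsFlowOf (-X) fun t => φ (-t) := by
  obtain ⟨h0, hadd, hder⟩ := hφ
  refine ⟨fun x => by simp [h0], fun s t x => by simp only [neg_add, hadd], fun x t => ?_⟩
  simpa [Function.comp_def] using (hder x (-t)).scomp t (hasDerivAt_neg t)

theorem iterate_apply (hφ : IsFlowOf X φ) (T : ℝ) (x : V) (n : ℕ) :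
    (φ T)^[n] x = φ (n * T) x := by
  induction n with
  | zero => simp [hφ.1]
  | succ n ih => rw [Function.iterate_succ_apply', ih, ← hφ.2.1]; push_cast; ring_nf

theorem norm_apply_sub_le_of_norm_le_mul (hφ : IsFlowOf X φ) {σ x : V} {δ N t : ℝ} (hN : 0 ≤ N)
    (hX : ∀ w, ‖w - σ‖ < δ → ‖X w‖ ≤ N * ‖w - σ‖)
    (hx : ‖x - σ‖ * Real.exp (N * t) < δ) :
    ∀ s ∈ Icc 0 t, ‖φ s x - σ‖ ≤ ‖x - σ‖ * Real.exp (N * s) := by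
  have hcont : Continuous fun s => φ s x - σ :=
    (hφ.isContinuousFlow.continuous_orbit x).sub continuous_const
  have hgron : ∀ τ ∈ Icc 0 t, (∀ u ∈ Ico 0 τ, ‖φ u x - σ‖ < δ) →
      ‖φ τ x - σ‖ ≤ ‖x - σ‖ * Real.exp (N * τ) := by
    intro τ hτ hsmall
    have := norm_le_gronwallBound_of_norm_deriv_right_le (δ := ‖x - σ‖) (K := N) (ε := 0)
      hcont.continuousOn
      (fun u _ => ((hφ.2.2 x u).sub_const σ).hasDerivWithinAt) (by simp [hφ.1])
      (fun u hu => by simpa using hX _ (hsmall u hu)) τ (right_mem_Icc.2 hτ.1)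
    simpa [gronwallBound_ε0] using this
  have hsmall := hcont.norm.continuousOn.forall_lt_of_forall_Ico_lt fun τ hτ hsmall =>
    (hgron τ hτ hsmall).trans_lt (lt_of_le_of_lt (by gcongr; exact hτ.2) hx)
  exact fun s hs => hgron s hs fun u hu => hsmall u ⟨hu.1, hu.2.le.trans hs.2⟩

theorem apply_eq_of_eq_zero (hφ : IsFlowOf X φ) {σ : V} (hd : DifferentiableAt ℝ X σ)
    (hσ : X σ = 0) (t : ℝ) : φ t σ = σ := by
  have key : ∀ {Y : V → V} {ψ : ℝ → V → V}, IsFlowOf Y ψ → DifferentiableAt ℝ Y σ → Y σ = 0 →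
      ∀ t, 0 ≤ t → ψ t σ = σ := by
    intro Y ψ hψ hd hσ t ht
    obtain ⟨δ, hδ, hlin⟩ := hd.exists_norm_le_mul_of_eq_zero hσ
    have := hψ.norm_apply_sub_le_of_norm_le_mul (by positivity) hlin (x := σ) (by simpa using hδ) t
      (right_mem_Icc.2 ht)
    simpa [sub_eq_zero] using this
  rcases le_total 0 t with ht | ht
  · exact key hφ hd hσ t ht
  · simpa using key hφ.reverse hd.neg (by simp [hσ]) (-t) (by linarith)

theorem norm_sub_exp_smul_le [CompleteSpace V] (hφ : IsFlowOf X φ) {A : V →L[ℝ] V}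
    {σ x : V} {η t : ℝ} (ht : 0 ≤ t) (hη : ∀ s ∈ Ico 0 t, ‖X (φ s x) - A (φ s x - σ)‖ ≤ η) :
    ‖φ t x - σ - NormedSpace.exp (t • A) (x - σ)‖ ≤ η * gronwallBound 0 ‖A‖ 1 t := by
  have hexp : ∀ s : ℝ, HasDerivAt (fun s : ℝ => NormedSpace.exp (s • A) (x - σ))
      (A (NormedSpace.exp (s • A) (x - σ))) s := fun s => by
    simpa using (hasDerivAt_exp_smul_const' A s).clm_apply (hasDerivAt_const s (x - σ))
  have hcont : Continuous fun s => φ s x - σ - NormedSpace.exp (s • A) (x - σ) :=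
    ((hφ.isContinuousFlow.continuous_orbit x).sub continuous_const).sub
      (continuous_iff_continuousAt.2 fun s => (hexp s).continuousAt)
  have := norm_le_gronwallBound_of_norm_deriv_right_le (δ := 0) (K := ‖A‖) (ε := η)
    (f' := fun s => A (φ s x - σ - NormedSpace.exp (s • A) (x - σ)) + (X (φ s x) - A (φ s x - σ)))
    hcont.continuousOn (fun s _ =>
      (((hφ.2.2 x s).sub_const σ).sub (hexp s)).hasDerivWithinAt.congr_deriv (by
        simp only [map_sub]
        abel))
    (by simp [hφ.1]) (fun s hs => (norm_add_le _ _).trans (add_le_add (A.le_opNorm _) (hη s hs)))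
    t (right_mem_Icc.2 ht)
  rwa [sub_zero, gronwallBound_zero_eq_mul] at this

theorem hasFDerivAt_apply_of_eq_zero_of_nonneg [CompleteSpace V] (hφ : IsFlowOf X φ) {σ : V}
    (hd : DifferentiableAt ℝ X σ) (hσ : X σ = 0) {t : ℝ} (ht : 0 ≤ t) :
    HasFDerivAt (φ t) (NormedSpace.exp (t • fderiv ℝ X σ)) σ := by
  -- up to time `t` the orbit of `x` stays within `‖x - σ‖ * E` of `σ`, where
  -- `X w - A (w - σ) = o(‖w - σ‖)`; Grönwall against `e^{sA}` makes the defect `o(‖x - σ‖)`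
  set A := fderiv ℝ X σ
  set E := Real.exp ((‖A‖ + 1) * t)
  set G := gronwallBound 0 ‖A‖ 1 t
  obtain ⟨δ₀, hδ₀, hlin⟩ := hd.exists_norm_le_mul_of_eq_zero hσ
  rw [hasFDerivAt_iff_isLittleO, Asymptotics.isLittleO_iff, hφ.apply_eq_of_eq_zero hd hσ t]
  intro c hc
  obtain ⟨c', hc', hc'c⟩ := exists_pos_mul_lt hc (G * E)
  obtain ⟨δ₁, hδ₁, hlo⟩ := Metric.eventually_nhds_iff.1 (hd.hasFDerivAt.isLittleO.def hc')
  have hE : 0 < E := Real.exp_pos _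
  filter_upwards [ball_mem_nhds σ (div_pos (lt_min hδ₀ hδ₁) hE)] with x hx
  rw [mem_ball, dist_eq_norm, lt_div_iff₀ hE, lt_min_iff] at hx
  have hstay : ∀ s ∈ Icc 0 t, ‖φ s x - σ‖ ≤ ‖x - σ‖ * E := fun s hs =>
    (hφ.norm_apply_sub_le_of_norm_le_mul (by positivity) hlin hx.1 s hs).trans <|
      mul_le_mul_of_nonneg_left (Real.exp_le_exp.2 (by gcongr; exact hs.2)) (norm_nonneg _)
  have hη : ∀ s ∈ Ico 0 t, ‖X (φ s x) - A (φ s x - σ)‖ ≤ c' * (‖x - σ‖ * E) := by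
    intro s hs
    have hs' := hstay s (Ico_subset_Icc_self hs)
    have := hlo (y := φ s x) (by rw [dist_eq_norm]; exact hs'.trans_lt hx.2)
    rw [hσ, sub_zero] at this
    exact this.trans (by gcongr)
  calc ‖φ t x - σ - NormedSpace.exp (t • A) (x - σ)‖ ≤ c' * (‖x - σ‖ * E) * G :=
        hφ.norm_sub_exp_smul_le ht hη
    _ = G * E * c' * ‖x - σ‖ := by ring
    _ ≤ c * ‖x - σ‖ := by gcongr

theorem hasFDerivAt_apply_of_eq_zero [CompleteSpace V] (hφ : IsFlowOf X φ) {σ : V}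
    (hd : DifferentiableAt ℝ X σ) (hσ : X σ = 0) (t : ℝ) :
    HasFDerivAt (φ t) (NormedSpace.exp (t • fderiv ℝ X σ)) σ := by
  rcases le_total 0 t with ht | ht
  · exact hφ.hasFDerivAt_apply_of_eq_zero_of_nonneg hd hσ ht
  · have := hφ.reverse.hasFDerivAt_apply_of_eq_zero_of_nonneg hd.neg (by simp [hσ])
      (neg_nonneg.2 ht)
    simpa [fderiv_neg] using this

theorem tangentFlow_neg_apply_tangentFlow [CompleteSpace V] (hφ : IsFlowOf X φ) {σ : V}
    (hd : DifferentiableAt ℝ X σ) (hσ : X σ = 0) (t : ℝ) (v : V) :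
    tangentFlow φ (-t) σ (tangentFlow φ t σ v) = v := by
  have hD : ∀ s, HasFDerivAt (φ s) (tangentFlow φ s σ) σ := fun s =>
    (hφ.hasFDerivAt_apply_of_eq_zero hd hσ s).differentiableAt.hasFDerivAt
  have hcomp : HasFDerivAt (φ (-t) ∘ φ t) ((tangentFlow φ (-t) σ).comp (tangentFlow φ t σ)) σ := by
    refine HasFDerivAt.comp σ ?_ (hD t)
    rw [hφ.apply_eq_of_eq_zero hd hσ t]
    exact hD (-t)
  rw [show φ (-t) ∘ φ t = id from funext (hφ.isContinuousFlow.apply_neg_apply t)] at hcomp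
  exact DFunLike.congr_fun (hcomp.unique (hasFDerivAt_id σ)) v

theorem exists_tendsto_nat_mul_of_hyperbolic [FiniteDimensional ℝ V] (hφ : IsFlowOf X φ)
    {σ : V} (hd : DifferentiableAt ℝ X σ) (hσ : X σ = 0) {Es Eu : Submodule ℝ V}
    (hhyp : IsHypSplitting (fun t => tangentFlow φ t σ) Es Eu) :
    ∃ T > 0, ∃ δ > 0, ∀ x, (∀ n : ℕ, dist (φ (n * T) x) σ ≤ δ) →
      Tendsto (fun n : ℕ => φ (n * T) x) atTop (𝓝 σ) := by
  obtain ⟨hinf, hsup, hEs, hEu, C, hC, lam, hlam, hbound⟩ := hhyp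
  obtain ⟨T, hθ, hT⟩ : ∃ T, 8 * (C * Real.exp (-lam * T)) ≤ 1 ∧ 0 < T := by
    have : Tendsto (fun T => 8 * (C * Real.exp (-lam * T))) atTop (𝓝 0) := by
      simpa using ((Real.tendsto_exp_atBot.comp
        (tendsto_id.const_mul_atTop_of_neg (neg_lt_zero.2 hlam))).const_mul C).const_mul 8
    exact ((this.eventually (eventually_le_nhds zero_lt_one)).and (eventually_gt_atTop 0)).exists
  obtain ⟨hcontr, hexpand⟩ := hbound T hT
  beta_reduce at hEs hEu hcontr hexpand
  have hD : HasFDerivAt (φ T) (tangentFlow φ T σ) σ :=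
    (hφ.hasFDerivAt_apply_of_eq_zero hd hσ T).differentiableAt.hasFDerivAt
  obtain ⟨δ, hδ, hloc⟩ := hD.tendsto_iterate_of_hyperbolic (hφ.apply_eq_of_eq_zero hd hσ T)
    ⟨disjoint_iff.2 hinf, codisjoint_iff.2 hsup⟩ (hEs T) (hEu T)
    (fun v hv => by nlinarith [hcontr v hv, norm_nonneg v])
    (fun v hv => by
      have := hexpand _ (hEu T v hv)
      rw [hφ.tangentFlow_neg_apply_tangentFlow hd hσ] at this
      nlinarith [norm_nonneg (tangentFlow φ T σ v)])
  refine ⟨T, hT, δ, hδ, fun x hx => ?_⟩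
  simp only [← hφ.iterate_apply] at hx ⊢
  exact hloc x hx

theorem exists_expLipschitzOn (hφ : IsFlowOf X φ) (hX : ContDiff ℝ 1 X) {Λ : Set V}
    (hΛ : IsCompact Λ) (hinv : ∀ t, MapsTo (φ t) Λ Λ) : ∃ K, 0 ≤ K ∧ ExpLipschitzOn φ K Λ := by
  obtain ⟨K, hK⟩ := hX.locallyLipschitz.locallyLipschitzOn.exists_lipschitzOnWith_of_compact hΛ
  refine ⟨K, K.coe_nonneg, fun t ht x hx y hy => ?_⟩
  have hcont := hφ.isContinuousFlow.continuous_orbit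
  simpa using dist_le_of_trajectories_ODE_of_mem (v := fun _ => X) (s := fun _ => Λ) (a := 0)
    (fun _ _ => hK) (hcont x).continuousOn (fun u _ => (hφ.2.2 x u).hasDerivWithinAt)
    (fun u _ => hinv u hx) (hcont y).continuousOn (fun u _ => (hφ.2.2 y u).hasDerivWithinAt)
    (fun u _ => hinv u hy) (by simp [hφ.1]) t (right_mem_Icc.2 ht)

theorem nonempty_inter_stableSet_diff [FiniteDimensional ℝ V] (hφ : IsFlowOf X φ)
    (hX : ContDiff ℝ 1 X) {Λ : Set V} (hΛ : ChainTransitiveSet φ Λ) {σ y : V} (hσΛ : σ ∈ Λ)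
    (hyΛ : y ∈ Λ) (hyσ : y ≠ σ) (hsing : X σ = 0) {Es Eu : Submodule ℝ V}
    (hhyp : IsHypSplitting (fun t => tangentFlow φ t σ) Es Eu) :
    (Λ ∩ (stableSet φ σ \ {σ})).Nonempty := by
  obtain ⟨hcomp, himage, hchain⟩ := hΛ
  have hinv : ∀ t, MapsTo (φ t) Λ Λ := fun t x hx => himage t ▸ mem_image_of_mem (φ t) hx
  have hd : DifferentiableAt ℝ X σ := hX.differentiable one_ne_zero σ
  have hfix := hφ.apply_eq_of_eq_zero hd hsing
  have hF := hφ.isContinuousFlow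
  obtain ⟨K, hK, hLip⟩ := hφ.exists_expLipschitzOn hX hcomp hinv
  obtain ⟨T, hT, δ, hδ, hloc⟩ := hφ.exists_tendsto_nat_mul_of_hyperbolic hd hsing hhyp
  set r := min (dist y σ) δ
  have hr : 0 < r := lt_min (dist_pos.2 hyσ) hδ
  obtain ⟨x, hxΛ, hxr, hxnear⟩ := hLip.exists_forward_orbit_near hF hcomp fun ε hε => by
    obtain ⟨n, z, t, hn, hz0, hzn, hzΛ, hjump⟩ := hchain ε hε y hyΛ σ hσΛ
    exact hLip.exists_orbit_near_of_chain hK hF hinv hfix hε.le hr.le hn hzΛ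
      (fun i hi => (hjump i hi).1) (fun i hi => (hjump i hi).2) (hz0 ▸ min_le_left _ _) hzn
  refine ⟨x, hxΛ, hLip.tendsto_atTop_of_tendsto_nat_mul hK hF hinv hσΛ hfix hxΛ hT
    (hloc x fun n => (hxnear _ (by positivity)).trans (min_le_right _ _)), fun hxσ => ?_⟩
  rw [mem_singleton_iff.1 hxσ, dist_self] at hxr
  exact hr.not_ge hxr

end IsFlowOf

/-- A non-trivial chain transitive set containing a hyperbolic singularity `σ`
intersects both `W^s(σ) \ {σ}` and `W^u(σ) \ {σ}`. -/
theorem chainTransitive_meets_stable_unstable [FiniteDimensional ℝ V]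
    (X : V → V) (hX : ContDiff ℝ 1 X) (φ : ℝ → V → V) (hφ : IsFlowOf X φ)
    (Λ : Set V) (hΛ : ChainTransitiveSet φ Λ)
    (hnontriv : ¬ ∃ (p : V) (T : ℝ), 0 < T ∧ φ T p = p ∧ Λ = Set.range fun t : ℝ => φ t p)
    (σ : V) (hσΛ : σ ∈ Λ) (hsing : X σ = 0)
    (Es Eu : Submodule ℝ V)
    (hhyp : IsHypSplitting (fun t => tangentFlow φ t σ) Es Eu) :
    (Λ ∩ (stableSet φ σ \ {σ})).Nonempty ∧ (Λ ∩ (unstableSet φ σ \ {σ})).Nonempty := by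
  have hfix := hφ.apply_eq_of_eq_zero (hX.differentiable one_ne_zero σ) hsing
  obtain ⟨y, hyΛ, hyσ⟩ : ∃ y ∈ Λ, y ≠ σ := by
    by_contra! hΛσ
    refine hnontriv ⟨σ, 1, one_pos, hfix 1, ?_⟩
    simp [eq_singleton_iff_unique_mem.2 ⟨hσΛ, hΛσ⟩, hfix]
  refine ⟨hφ.nonempty_inter_stableSet_diff hX hΛ hσΛ hyΛ hyσ hsing hhyp, ?_⟩
  rw [unstableSet_eq_stableSet_neg]
  exact hφ.reverse.nonempty_inter_stableSet_diff hX.neg (hΛ.reverse hφ.isContinuousFlow) hσΛ hyΛ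
    hyσ (by simp [hsing]) hhyp.reverse
end

section
/- For a C¹ vector field X, a compact set K, sequences X_n → X in C¹ topology and compact sets K_n → K in Hausdorff topology, one has limsup_{n→∞} CR(X_n, K_n) ⊂ CR(X, K). -/
open Set Metric Filter Module

variable {V : Type*} [NormedAddCommGroup V] [NormedSpace ℝ V]

/-- `CR(X, K)`: the union of all chain transitive sets of the flow `φ` contained in `K`. -/
def CRset {M : Type*} [MetricSpace M] (φ : ℝ → M → M) (K : Set M) : Set M :=
  {x | ∃ Λ : Set M, Λ ⊆ K ∧ ChainTransitiveSet φ Λ ∧ x ∈ Λ}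

/-- `Xₙ → X` in the `C¹` topology. -/
def TendstoC1 (Xn : ℕ → V → V) (X : V → V) : Prop :=
  TendstoUniformly Xn X atTop ∧
    TendstoUniformly (fun n x => fderiv ℝ (Xn n) x) (fun x => fderiv ℝ X x) atTop


/-!
Pass to a subsequence along which the chain transitive sets `Λₖ ⊆ Kₙₖ` through the points `xₖ`
converge in the Hausdorff metric to a compact set `Λ` (Blaschke selection: eventually all `Λₖ`
lie in the compact `1`-neighbourhood of `K`); then `x ∈ Λ ⊆ K`. Since `X` is Lipschitz near the
compact set `Λ`, Grönwall's inequality shows that, over a bounded time window, orbits of the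
`C⁰`-close fields `Xₙ` starting near `Λ` stay uniformly close to orbits of `X`. This makes `Λ`
invariant under the flow of `X`, and turns an `ε/3`-chain of `φₙ` in `Λₖ` with jump times in
`[1, 2]` into an `ε`-chain of `φ` in `Λ`.
-/

open scoped NNReal Topology

lemma dist_trajectory_le_gronwallBound {X Y : V → V} {ψ χ : ℝ → V} {K : ℝ≥0} {s : Set V}
    {r δ ε T : ℝ} (hX : LipschitzOnWith K X s) (hs : ∀ t ∈ Icc 0 T, ball (χ t) r ⊆ s)
    (hψ : ∀ t, HasDerivAt ψ (Y (ψ t)) t) (hχ : ∀ t, HasDerivAt χ (X (χ t)) t)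
    (hYX : ∀ u, dist (Y u) (X u) ≤ ε) (h0 : dist (ψ 0) (χ 0) ≤ δ)
    (hsmall : gronwallBound δ K ε T < r) :
    ∀ t ∈ Icc 0 T, dist (ψ t) (χ t) ≤ gronwallBound δ K ε t := by
  have hψc : Continuous ψ := continuous_iff_continuousAt.2 fun t => (hψ t).continuousAt
  have hχc : Continuous χ := continuous_iff_continuousAt.2 fun t => (hχ t).continuousAt
  have hgron : ∀ b ≤ T, (∀ t ∈ Ico 0 b, dist (ψ t) (χ t) < r) →
      ∀ t ∈ Icc 0 b, dist (ψ t) (χ t) ≤ gronwallBound δ K ε t := by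
    intro b hb hnear t ht
    have hsub : ∀ t ∈ Ico 0 b, ball (χ t) r ⊆ s := fun t ht => hs t ⟨ht.1, ht.2.le.trans hb⟩
    simpa using dist_le_of_approx_trajectories_ODE_of_mem (v := fun _ => X) (s := fun _ => s)
      (fun _ _ => hX) hψc.continuousOn (fun t _ => (hψ t).hasDerivWithinAt) (fun t _ => hYX _)
      (fun t ht => hsub t ht (mem_ball.2 (hnear t ht))) hχc.continuousOn
      (fun t _ => (hχ t).hasDerivWithinAt) (fun t _ => (dist_self _).le)
      (fun t ht => hsub t ht (mem_ball_self (dist_nonneg.trans_lt (hnear t ht)))) h0 t ht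
  have hδ : 0 ≤ δ := dist_nonneg.trans h0
  have hε : 0 ≤ ε := dist_nonneg.trans (hYX 0)
  refine hgron T le_rfl fun t ht => ?_
  by_contra! hfar
  -- the first time in `[0, T]` at which `ψ` leaves the `r`-tube around `χ`
  set A := {t ∈ Icc 0 T | r ≤ dist (ψ t) (χ t)}
  have hA : IsClosed A := isClosed_Icc.inter (isClosed_le continuous_const (hψc.dist hχc))
  have hbdd : BddBelow A := ⟨0, fun u hu => hu.1.1⟩
  have hmem : sInf A ∈ A := hA.csInf_mem ⟨t, ⟨ht.1, ht.2.le⟩, hfar⟩ hbdd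
  have hbefore : ∀ u ∈ Ico 0 (sInf A), dist (ψ u) (χ u) < r := fun u hu =>
    lt_of_not_ge fun hu' => hu.2.not_ge (csInf_le hbdd ⟨⟨hu.1, hu.2.le.trans hmem.1.2⟩, hu'⟩)
  have hfirst : r ≤ dist (ψ (sInf A)) (χ (sInf A)) := hmem.2
  have hgronwall := hgron _ hmem.1.2 hbefore _ ⟨hmem.1.1, le_rfl⟩
  have hmono : gronwallBound δ K ε (sInf A) ≤ gronwallBound δ K ε T :=
    gronwallBound_mono hδ hε K.2 hmem.1.2
  linarith

lemma exists_pos_dist_trajectory_le [FiniteDimensional ℝ V] {X : V → V} (hX : ContDiff ℝ 1 X)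
    {χ : ℝ → V} (hχ : ∀ t, HasDerivAt χ (X (χ t)) t) (T : ℝ) {ζ : ℝ} (hζ : 0 < ζ) :
    ∃ η > 0, ∀ Y : V → V, (∀ u, dist (Y u) (X u) ≤ η) → ∀ ψ : ℝ → V,
      (∀ t, HasDerivAt ψ (Y (ψ t)) t) → dist (ψ 0) (χ 0) ≤ η →
      ∀ t ∈ Icc 0 T, dist (ψ t) (χ t) ≤ ζ := by
  have hχc : Continuous χ := continuous_iff_continuousAt.2 fun t => (hχ t).continuousAt
  set C := cthickening 1 (χ '' Icc 0 T)
  obtain ⟨K, hK⟩ := (hX.locallyLipschitz.locallyLipschitzOn (s := C))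
    |>.exists_lipschitzOnWith_of_compact (isCompact_Icc.image hχc).cthickening
  have hcont : Continuous fun η => gronwallBound η K η T := by
    unfold gronwallBound; split_ifs <;> fun_prop
  have hsmall : ∀ᶠ η in 𝓝 0, gronwallBound η K η T < min ζ 1 :=
    hcont.continuousAt.eventually_lt continuousAt_const
      (by simpa [gronwallBound_ε0_δ0] using lt_min hζ one_pos)
  obtain ⟨η, hηsmall, hη⟩ :=
    ((hsmall.filter_mono nhdsWithin_le_nhds).and (self_mem_nhdsWithin (s := Ioi 0))).exists
  refine ⟨η, hη, fun Y hY ψ hψ h0 t ht => ?_⟩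
  have htube : ∀ t ∈ Icc 0 T, ball (χ t) 1 ⊆ C := fun t ht =>
    ball_subset_closedBall.trans (closedBall_subset_cthickening (mem_image_of_mem χ ht) 1)
  calc dist (ψ t) (χ t)
      ≤ gronwallBound η K η t := dist_trajectory_le_gronwallBound hK htube hψ hχ hY h0
        (hηsmall.trans_le (min_le_right _ _)) t ht
    _ ≤ gronwallBound η K η T := gronwallBound_mono hη.le hη.le K.2 ht.2
    _ ≤ ζ := hηsmall.le.trans (min_le_left _ _)

lemma IsFlowOf.exists_pos_forall_dist_trajectory_le [FiniteDimensional ℝ V] {X : V → V}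
    {φ : ℝ → V → V} (hφ : IsFlowOf X φ) (hX : ContDiff ℝ 1 X) {Λ : Set V} (hΛ : IsCompact Λ)
    (T : ℝ) {ζ : ℝ} (hζ : 0 < ζ) :
    ∃ η > 0, ∀ Y : V → V, (∀ u, dist (Y u) (X u) ≤ η) → ∀ ψ : ℝ → V,
      (∀ t, HasDerivAt ψ (Y (ψ t)) t) → ∀ y ∈ Λ, dist (ψ 0) y ≤ η →
      ∀ t ∈ Icc 0 T, dist (ψ t) (φ t y) ≤ ζ := by
  set P : ℝ → V → Prop := fun η y => ∀ Y : V → V, (∀ u, dist (Y u) (X u) ≤ η) →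
    ∀ ψ : ℝ → V, (∀ t, HasDerivAt ψ (Y (ψ t)) t) → dist (ψ 0) y ≤ η →
      ∀ t ∈ Icc 0 T, dist (ψ t) (φ t y) ≤ ζ
  have hlocal : ∀ y ∈ Λ, ∀ᶠ p : ℝ × V in 𝓝 (0, y), P p.1 p.2 := by
    intro y _
    obtain ⟨η, hη, hy⟩ := exists_pos_dist_trajectory_le hX (hφ.2.2 y) T (half_pos hζ)
    filter_upwards [prod_mem_nhds (ball_mem_nhds 0 (half_pos hη)) (ball_mem_nhds y (half_pos hη))]
      with ⟨η', y'⟩ ⟨hη', hy'⟩ Y hY ψ hψ h0 t ht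
    dsimp only at hη' hy' hY h0 ⊢
    rw [mem_ball, Real.dist_0_eq_abs] at hη'
    rw [mem_ball] at hy'
    have hη'η : η' < η / 2 := (le_abs_self η').trans_lt hη'
    have hψ' : dist (ψ t) (φ t y) ≤ ζ / 2 :=
      hy Y (fun u => (hY u).trans (by linarith)) ψ hψ
        (by rw [hφ.1]; linarith [dist_triangle (ψ 0) y' y]) t ht
    have hφ' : dist (φ t y') (φ t y) ≤ ζ / 2 :=
      hy X (fun u => by simpa using hη.le) _ (hφ.2.2 y') (by rw [hφ.1, hφ.1]; linarith) t ht
    linarith [dist_triangle_right (ψ t) (φ t y') (φ t y)]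
  obtain ⟨η, hη, hpos⟩ := (((hΛ.eventually_forall_of_forall_eventually hlocal).filter_mono
    nhdsWithin_le_nhds).and (self_mem_nhdsWithin (s := Ioi 0))).exists
  exact ⟨η, hpos, fun Y hY ψ hψ y hy => hη y hy Y hY ψ hψ⟩

lemma IsFlowOf.reverse_s12 {X : V → V} {φ : ℝ → V → V} (hφ : IsFlowOf X φ) :
    IsFlowOf (fun x => -X x) (fun t => φ (-t)) := by
  refine ⟨fun x => by simpa using hφ.1 x, fun s t x => by simp only [neg_add, hφ.2.1],
    fun x t => ?_⟩
  simpa [Function.comp_def] using (hφ.2.2 x (-t)).scomp t (hasDerivAt_neg t)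

lemma IsFlowOf.eventually_forall_dist_le [FiniteDimensional ℝ V] {ι : Type*} {l : Filter ι}
    {X : V → V} {φ : ℝ → V → V} {Y : ι → V → V} {ψ : ι → ℝ → V → V} (hφ : IsFlowOf X φ)
    (hX : ContDiff ℝ 1 X) (hψ : ∀ j, IsFlowOf (Y j) (ψ j)) (hY : TendstoUniformly Y X l)
    {Λ : Set V} (hΛ : IsCompact Λ) (T : ℝ) {ζ : ℝ} (hζ : 0 < ζ) :
    ∃ η > 0, ∀ᶠ j in l, ∀ y ∈ Λ, ∀ z, dist z y ≤ η →
      ∀ t ∈ Icc (-T) T, dist (ψ j t z) (φ t y) ≤ ζ := by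
  obtain ⟨η₁, hη₁, hfwd⟩ := hφ.exists_pos_forall_dist_trajectory_le hX hΛ T hζ
  obtain ⟨η₂, hη₂, hbwd⟩ := hφ.reverse_s12.exists_pos_forall_dist_trajectory_le hX.neg hΛ T hζ
  refine ⟨min η₁ η₂, lt_min hη₁ hη₂, ?_⟩
  filter_upwards [Metric.tendstoUniformly_iff.1 hY _ (lt_min hη₁ hη₂)] with j hj y hy z hz t ht
  have hYX : ∀ u, dist (Y j u) (X u) ≤ min η₁ η₂ := fun u => by
    rw [dist_comm]; exact (hj u).le
  rcases le_total 0 t with h | h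
  · exact hfwd (Y j) (fun u => (hYX u).trans (min_le_left _ _)) _ ((hψ j).2.2 z) y hy
      (by simpa [(hψ j).1] using hz.trans (min_le_left _ _)) t ⟨h, ht.2⟩
  · simpa using hbwd (fun u => -Y j u) (fun u => by simpa using (hYX u).trans (min_le_right _ _))
      _ ((hψ j).reverse_s12.2.2 z) y hy (by simpa [(hψ j).1] using hz.trans (min_le_right _ _))
      (-t) ⟨by linarith, by linarith [ht.1]⟩

section HausdorffLimits

variable {M : Type*} [MetricSpace M] {ι : Type*} {l : Filter ι} {S : ι → Set M} {Λ : Set M}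

lemma eventually_forall_exists_dist_lt
    (hS : Tendsto (fun j => hausdorffEDist (S j) Λ) l (𝓝 0)) {ρ : ℝ} (hρ : 0 < ρ) :
    ∀ᶠ j in l, (∀ z ∈ S j, ∃ y ∈ Λ, dist z y < ρ) ∧ ∀ y ∈ Λ, ∃ z ∈ S j, dist y z < ρ := by
  filter_upwards [hS.eventually (gt_mem_nhds (ENNReal.ofReal_pos.2 hρ))] with j hj
  refine ⟨fun z hz => ?_, fun y hy => ?_⟩
  · obtain ⟨y, hy, hzy⟩ := exists_edist_lt_of_hausdorffEDist_lt hz hj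
    exact ⟨y, hy, edist_lt_ofReal.1 hzy⟩
  · obtain ⟨z, hz, hyz⟩ := exists_edist_lt_of_hausdorffEDist_lt hy
      (by rwa [hausdorffEDist_comm] at hj)
    exact ⟨z, hz, edist_lt_ofReal.1 hyz⟩

lemma IsClosed.mem_of_tendsto_infEDist [l.NeBot] (hΛ : IsClosed Λ) {x : M}
    (hx : Tendsto (fun j => infEDist x (S j)) l (𝓝 0))
    (hS : Tendsto (fun j => hausdorffEDist (S j) Λ) l (𝓝 0)) : x ∈ Λ := by
  rw [← hΛ.closure_eq, mem_closure_iff_infEDist_zero]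
  refine le_antisymm (ge_of_tendsto (by simpa using hx.add hS) ?_) bot_le
  exact Eventually.of_forall fun j => infEDist_le_infEDist_add_hausdorffEDist

lemma IsClosed.mem_of_tendsto_of_tendsto_hausdorffEDist [l.NeBot] (hΛ : IsClosed Λ)
    {x : M} {xs : ι → M} (hxs : ∀ j, xs j ∈ S j) (hx : Tendsto xs l (𝓝 x))
    (hS : Tendsto (fun j => hausdorffEDist (S j) Λ) l (𝓝 0)) : x ∈ Λ := by
  refine hΛ.mem_of_tendsto_infEDist (tendsto_of_tendsto_of_tendsto_of_le_of_le tendsto_const_nhds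
    ?_ (fun _ => bot_le) fun j => infEDist_le_edist_of_mem (hxs j)) hS
  exact (tendsto_iff_edist_tendsto_0.1 hx).congr fun j => edist_comm _ _

lemma IsClosed.subset_of_tendsto_hausdorffEDist [l.NeBot] {K : Set M} (hK : IsClosed K)
    {T : ι → Set M} (hST : ∀ j, S j ⊆ T j)
    (hS : Tendsto (fun j => hausdorffEDist (S j) Λ) l (𝓝 0))
    (hT : Tendsto (fun j => hausdorffEDist (T j) K) l (𝓝 0)) : Λ ⊆ K := by
  refine fun y hy => hK.mem_of_tendsto_infEDist (tendsto_of_tendsto_of_tendsto_of_le_of_le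
    tendsto_const_nhds hS (fun _ => bot_le) fun j => ?_) hT
  rw [hausdorffEDist_comm]
  exact (infEDist_anti (hST j)).trans (infEDist_le_hausdorffEDist_of_mem hy)

lemma IsClosed.mapsTo_of_tendsto_hausdorffEDist [l.NeBot] (hΛ : IsClosed Λ)
    (hS : Tendsto (fun j => hausdorffEDist (S j) Λ) l (𝓝 0)) {f : ι → M → M} {g : M → M}
    (hf : ∀ j, MapsTo (f j) (S j) (S j))
    (hfg : ∀ ζ > 0, ∃ η > 0, ∀ᶠ j in l, ∀ y ∈ Λ, ∀ z, dist z y ≤ η → dist (f j z) (g y) ≤ ζ) :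
    MapsTo g Λ Λ := by
  intro y hy
  rw [← hΛ.closure_eq, Metric.mem_closure_iff]
  intro ρ hρ
  obtain ⟨η, hη, hfgη⟩ := hfg (ρ / 2) (half_pos hρ)
  obtain ⟨j, hj, hnear⟩ :=
    (hfgη.and (eventually_forall_exists_dist_lt hS (lt_min hη (half_pos hρ)))).exists
  obtain ⟨z, hz, hyz⟩ := hnear.2 y hy
  obtain ⟨w, hw, hzw⟩ := hnear.1 (f j z) (hf j hz)
  have hgf : dist (f j z) (g y) ≤ ρ / 2 :=
    hj y hy z (by rw [dist_comm]; exact hyz.le.trans (min_le_left _ _))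
  refine ⟨w, hw, ?_⟩
  linarith [dist_triangle_left (g y) w (f j z), min_le_right η (ρ / 2)]

lemma IsCompact.exists_strictMono_tendsto_hausdorffEDist {C : Set M} (hC : IsCompact C)
    {S : ℕ → Set M} (hS : ∀ k, IsClosed (S k)) (hne : ∀ k, (S k).Nonempty)
    (hSC : ∀ᶠ k in atTop, S k ⊆ C) :
    ∃ Λ, IsCompact Λ ∧ ∃ σ : ℕ → ℕ, StrictMono σ ∧
      Tendsto (fun j => hausdorffEDist (S (σ j)) Λ) atTop (𝓝 0) := by
  obtain ⟨N, hN⟩ := eventually_atTop.1 hSC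
  have : CompactSpace C := isCompact_iff_compactSpace.1 hC
  let F : ℕ → TopologicalSpace.NonemptyCompacts C := fun k =>
    ⟨⟨(↑) ⁻¹' S (k + N), ((hS _).preimage continuous_subtype_val).isCompact⟩,
      let ⟨z, hz⟩ := hne (k + N); ⟨⟨z, hN _ (Nat.le_add_left N k) hz⟩, hz⟩⟩
  obtain ⟨Λ', -, τ, hτ, hlim⟩ := isCompact_univ.tendsto_subseq fun k => mem_univ (F k)
  refine ⟨(↑) '' (Λ' : Set C), Λ'.isCompact.image continuous_subtype_val, fun j => τ j + N,
    hτ.add_const N, ?_⟩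
  have hF : ∀ k, S (k + N) = (↑) '' (F k : Set C) := fun k => by
    simp [F, Subtype.image_preimage_coe, inter_eq_right.2 (hN _ (Nat.le_add_left N k))]
  simp_rw [hF, hausdorffEDist_image isometry_subtype_coe]
  exact tendsto_iff_edist_tendsto_0.1 hlim

end HausdorffLimits

lemma transGen_iff_exists_seq {α : Type*} {r : α → α → Prop} {a b : α} :
    Relation.TransGen r a b ↔
      ∃ n, 1 ≤ n ∧ ∃ f : ℕ → α, f 0 = a ∧ f n = b ∧ ∀ i < n, r (f i) (f (i + 1)) := by
  constructor
  · intro h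
    induction h with
    | single hab => exact ⟨1, le_rfl, fun i => if i = 0 then a else _, rfl, rfl, by simpa⟩
    | @tail c d _ hcd ih =>
      obtain ⟨n, hn, f, hf0, hfn, hf⟩ := ih
      refine ⟨n + 1, by omega, fun i => if i ≤ n then f i else d, by simpa, by simp, fun i hi => ?_⟩
      rcases (Nat.lt_succ_iff.1 hi).lt_or_eq with hi | rfl
      · simpa [hi.le, Nat.succ_le_of_lt hi] using hf i hi
      · simpa [hfn] using hcd
  · rintro ⟨n, hn, f, rfl, rfl, hf⟩
    induction n, hn using Nat.le_induction with
    | base => exact .single (hf 0 one_pos)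
    | succ n hn ih => exact (ih fun i hi => hf i (by omega)).tail (hf n (by omega))

lemma Relation.TransGen.of_simulation {α β : Type*} {r : α → α → Prop} {p : β → β → Prop}
    (S : α → β → Prop) (hS : ∀ a a' b b', r a a' → S a b → S a' b' → p b b')
    (hex : ∀ a a', r a a' → ∃ b', S a' b') {a a' : α} {b b' : β} (h : Relation.TransGen r a a')
    (hab : S a b) (hab' : S a' b') : Relation.TransGen p b b' := by
  induction h using Relation.TransGen.head_induction_on generalizing b with
  | single hr => exact .single (hS _ _ _ _ hr hab hab')
  | head hr _ ih =>
    obtain ⟨c, hc⟩ := hex _ _ hr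
    exact .head (hS _ _ _ _ hr hab hc) (ih hc)

lemma image_flow_eq_of_forall_mapsTo_Icc {α : Type*} {φ : ℝ → α → α} {Λ : Set α}
    (h0 : ∀ x, φ 0 x = x) (hadd : ∀ s t x, φ (s + t) x = φ s (φ t x))
    (hΛ : ∀ t ∈ Icc (-1 : ℝ) 1, MapsTo (φ t) Λ Λ) (t : ℝ) : φ t '' Λ = Λ := by
  have hmul : ∀ s ∈ Icc (-1 : ℝ) 1, ∀ n : ℕ, MapsTo (φ (n * s)) Λ Λ := by
    intro s hs n
    induction n with
    | zero => simpa using hΛ 0 (by norm_num)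
    | succ n ih =>
      have hφ : φ ((n + 1 : ℕ) * s) = φ s ∘ φ (n * s) := by
        ext x; push_cast; rw [add_one_mul, add_comm, hadd]; rfl
      exact hφ ▸ (hΛ s hs).comp ih
  -- every time is a multiple of a time in `[-1, 1]`
  have hmaps : ∀ t, MapsTo (φ t) Λ Λ := fun t => by
    obtain ⟨n, hn⟩ := exists_nat_gt |t|
    have hn0 : (0 : ℝ) < n := (abs_nonneg t).trans_lt hn
    have hs : t / n ∈ Icc (-1 : ℝ) 1 := by
      rw [mem_Icc, ← abs_le, abs_div, Nat.abs_cast, div_le_one hn0]; exact hn.le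
    simpa [mul_div_cancel₀ t hn0.ne'] using hmul _ hs n
  refine (hmaps t).image_subset.antisymm fun y hy => ⟨φ (-t) y, hmaps (-t) hy, ?_⟩
  rw [← hadd, add_neg_cancel, h0]

section Chains

variable {M : Type*} [MetricSpace M]

def ChainStep (φ : ℝ → M → M) (Λ : Set M) (ε : ℝ) (I : Set ℝ) (a b : M) : Prop :=
  a ∈ Λ ∧ b ∈ Λ ∧ ∃ t ∈ I, dist (φ t a) b < ε

lemma chainTransitiveSet_iff {φ : ℝ → M → M} {Λ : Set M} :
    ChainTransitiveSet φ Λ ↔ IsCompact Λ ∧ (∀ t, φ t '' Λ = Λ) ∧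
      ∀ ε > 0, ∀ x ∈ Λ, ∀ y ∈ Λ, Relation.TransGen (ChainStep φ Λ ε (Ici 1)) x y := by
  refine and_congr_right fun _ => and_congr_right fun _ =>
    forall₂_congr fun ε _ => forall₂_congr fun x _ => forall₂_congr fun y _ => ?_
  rw [transGen_iff_exists_seq]
  constructor
  · rintro ⟨n, xs, ts, hn, hx, hy, hmem, hstep⟩
    exact ⟨n, hn, xs, hx, hy, fun i hi => ⟨hmem i hi.le, hmem (i + 1) hi, ts i, hstep i hi⟩⟩
  · rintro ⟨n, hn, xs, hx, hy, hstep⟩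
    choose! ts hts using fun i hi => (hstep i hi).2.2
    refine ⟨n, xs, ts, hn, hx, hy, fun i hi => ?_, hts⟩
    rcases hi.lt_or_eq with hi | rfl
    · exact (hstep i hi).1
    · simpa [Nat.sub_add_cancel hn] using (hstep (i - 1) (by omega)).2.1

lemma ChainStep.transGen_Icc {φ : ℝ → M → M} {Λ : Set M} {ε : ℝ} {a b : M}
    (hadd : ∀ s t x, φ (s + t) x = φ s (φ t x)) (hΛ : MapsTo (φ 1) Λ Λ) (hε : 0 < ε)
    (h : ChainStep φ Λ ε (Ici 1) a b) : Relation.TransGen (ChainStep φ Λ ε (Icc 1 2)) a b := by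
  obtain ⟨ha, hb, t, ht, hd⟩ := h
  obtain ⟨n, hn⟩ := exists_nat_ge t
  -- a long jump is preceded by exact unit-time steps along the orbit
  induction n generalizing a t with
  | zero => exact absurd (ht.trans hn) (by norm_num)
  | succ n ih =>
    by_cases ht2 : t ≤ 2
    · exact .single ⟨ha, hb, t, ⟨ht, ht2⟩, hd⟩
    · refine .head ⟨ha, hΛ ha, 1, ⟨le_rfl, one_le_two⟩, by simpa using hε⟩ ?_
      refine ih (hΛ ha) (t - 1) (by rw [mem_Ici] at ht ⊢; linarith) ?_
        (by push_cast at hn; linarith)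
      rwa [← hadd, sub_add_cancel]

end Chains

theorem ChainTransitiveSet.of_tendsto_hausdorffEDist [FiniteDimensional ℝ V] {ι : Type*}
    {l : Filter ι} [l.NeBot] {X : V → V} {φ : ℝ → V → V} {Y : ι → V → V} {ψ : ι → ℝ → V → V}
    {S : ι → Set V} {Λ : Set V} (hX : ContDiff ℝ 1 X) (hφ : IsFlowOf X φ)
    (hψ : ∀ j, IsFlowOf (Y j) (ψ j)) (hY : TendstoUniformly Y X l)
    (hS : ∀ j, ChainTransitiveSet (ψ j) (S j)) (hΛ : IsCompact Λ)
    (hSΛ : Tendsto (fun j => hausdorffEDist (S j) Λ) l (𝓝 0)) : ChainTransitiveSet φ Λ := by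
  have hSinv : ∀ j t, MapsTo (ψ j t) (S j) (S j) := fun j t =>
    mapsTo_iff_image_subset.2 ((hS j).2.1 t).le
  have hΛinv : ∀ t ∈ Icc (-1 : ℝ) 1, MapsTo (φ t) Λ Λ := fun t ht =>
    hΛ.isClosed.mapsTo_of_tendsto_hausdorffEDist hSΛ (fun j => hSinv j t) fun ζ hζ =>
      let ⟨η, hη, h⟩ := hφ.eventually_forall_dist_le hX hψ hY hΛ 1 hζ
      ⟨η, hη, h.mono fun j hj y hy z hz => hj y hy z hz t ht⟩
  refine chainTransitiveSet_iff.2 ⟨hΛ, image_flow_eq_of_forall_mapsTo_Icc hφ.1 hφ.2.1 hΛinv,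
    fun ε hε p hp q hq => ?_⟩
  obtain ⟨η, hη, hshadow⟩ :=
    hφ.eventually_forall_dist_le hX hψ hY hΛ 2 (by positivity : 0 < ε / 3)
  set δ := min η (ε / 3)
  have hδ : 0 < δ := lt_min hη (by positivity)
  obtain ⟨j, hj, hnear⟩ := (hshadow.and (eventually_forall_exists_dist_lt hSΛ hδ)).exists
  obtain ⟨zp, hzp, hpz⟩ := hnear.2 p hp
  obtain ⟨zq, hzq, hqz⟩ := hnear.2 q hq
  have hchain : Relation.TransGen (ChainStep (ψ j) (S j) (ε / 3) (Icc 1 2)) zp zq :=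
    ((chainTransitiveSet_iff.1 (hS j)).2.2 _ (by positivity) zp hzp zq hzq).trans_induction_on
      (fun h => h.transGen_Icc (hψ j).2.1 (hSinv j 1) (by positivity)) fun _ _ => .trans
  -- a chain of `ψ j` in `S j` is shadowed by a chain of `φ` in `Λ` through nearby points
  refine hchain.of_simulation (fun z y => y ∈ Λ ∧ dist z y < δ) ?_
    (fun _ z' h => hnear.1 z' h.2.1) ⟨hp, by rwa [dist_comm]⟩ ⟨hq, by rwa [dist_comm]⟩
  rintro z z' y y' ⟨-, -, t, ht, hd⟩ ⟨hy, hzy⟩ ⟨hy', hzy'⟩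
  have hφψ := hj y hy z (hzy.le.trans (min_le_left _ _)) t ⟨by linarith [ht.1], ht.2⟩
  refine ⟨hy, hy', t, ht.1, ?_⟩
  linarith [dist_triangle4 (φ t y) (ψ j t z) z' y', dist_comm (φ t y) (ψ j t z),
    min_le_right η (ε / 3)]

theorem limsup_CRset_subset_general [FiniteDimensional ℝ V]
    (Xn : ℕ → V → V) (X : V → V) (hX : ContDiff ℝ 1 X)
    (φn : ℕ → ℝ → V → V) (φ : ℝ → V → V)
    (hφn : ∀ n, IsFlowOf (Xn n) (φn n)) (hφ : IsFlowOf X φ)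
    (hC1 : TendstoC1 Xn X)
    (Kn : ℕ → Set V) (K : Set V)
    (hKn : ∀ n, IsCompact (Kn n))
    (hK : IsCompact K) (hKne : K.Nonempty)
    (hHaus : Tendsto (fun n => hausdorffDist (Kn n) K) atTop (nhds 0)) :
    ∀ x : V, (∃ ns : ℕ → ℕ, StrictMono ns ∧ ∃ xs : ℕ → V,
        (∀ k, xs k ∈ CRset (φn (ns k)) (Kn (ns k))) ∧ Tendsto xs atTop (nhds x)) →
      x ∈ CRset φ K := by
  rintro x ⟨ns, hns, xs, hxs, hx⟩
  choose S hSK hS hxS using hxs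
  have hKns : Tendsto (fun k => hausdorffEDist (Kn (ns k)) K) atTop (𝓝 0) :=
    (ENNReal.tendsto_toReal_iff (fun k => hausdorffEDist_ne_top_of_nonempty_of_bounded
      ⟨xs k, hSK k (hxS k)⟩ hKne (hKn _).isBounded hK.isBounded) ENNReal.zero_ne_top).1
      (by simpa [Function.comp_def, hausdorffDist] using hHaus.comp hns.tendsto_atTop)
  have hSC : ∀ᶠ k in atTop, S k ⊆ cthickening 1 K :=
    (hKns.eventually (gt_mem_nhds one_pos)).mono fun k hk => (hSK k).trans fun z hz =>
      mem_cthickening_iff.2 (by simpa using (infEDist_le_hausdorffEDist_of_mem hz).trans hk.le)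
  obtain ⟨Λ, hΛ, σ, hσ, hSΛ⟩ := hK.cthickening.exists_strictMono_tendsto_hausdorffEDist
    (fun k => (hS k).1.isClosed) (fun k => ⟨xs k, hxS k⟩) hSC
  replace hσ := hσ.tendsto_atTop
  have hY : TendstoUniformly (fun j => Xn (ns (σ j))) X atTop := fun u hu =>
    (hns.tendsto_atTop.comp hσ).eventually (hC1.1 u hu)
  exact ⟨Λ, hK.isClosed.subset_of_tendsto_hausdorffEDist (fun j => hSK (σ j)) hSΛ (hKns.comp hσ),
    .of_tendsto_hausdorffEDist hX hφ (fun j => hφn _) hY (fun j => hS (σ j)) hΛ hSΛ,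
    hΛ.isClosed.mem_of_tendsto_of_tendsto_hausdorffEDist (fun j => hxS (σ j)) (hx.comp hσ) hSΛ⟩

/-- Upper semicontinuity of `(X, K) ↦ CR(X, K)`:
`limsup CR(Xₙ, Kₙ) ⊆ CR(X, K)` when `Xₙ → X` in `C¹` and `Kₙ → K` in Hausdorff metric. -/
theorem limsup_CRset_subset [FiniteDimensional ℝ V]
    (Xn : ℕ → V → V) (X : V → V) (hXn : ∀ n, ContDiff ℝ 1 (Xn n)) (hX : ContDiff ℝ 1 X)
    (φn : ℕ → ℝ → V → V) (φ : ℝ → V → V)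
    (hφn : ∀ n, IsFlowOf (Xn n) (φn n)) (hφ : IsFlowOf X φ)
    (hC1 : TendstoC1 Xn X)
    (Kn : ℕ → Set V) (K : Set V)
    (hKn : ∀ n, IsCompact (Kn n)) (hKnne : ∀ n, (Kn n).Nonempty)
    (hK : IsCompact K) (hKne : K.Nonempty)
    (hHaus : Tendsto (fun n => hausdorffDist (Kn n) K) atTop (nhds 0)) :
    ∀ x : V, (∃ ns : ℕ → ℕ, StrictMono ns ∧ ∃ xs : ℕ → V,
        (∀ k, xs k ∈ CRset (φn (ns k)) (Kn (ns k))) ∧ Tendsto xs atTop (nhds x)) →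
      x ∈ CRset φ K :=
  limsup_CRset_subset_general Xn X hX φn φ hφn hφ hC1 Kn K hKn hK hKne hHaus
end
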